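/- arXiv:1703.07573 — 9 statements merged into one kernel-verified Lean document; each statement's English description precedes it below -/
import Mathlib

section
/- Let A be an isotropic subspace and L a Lagrangian subspace of H. Then ((L + A) ∩ A^⊥)^⊥ ∩ A^⊥ = (L + A) ∩ A^⊥. Equivalently, the contraction L|A := ((L + A) ∩ A^⊥)/A of L along A equals its own orthogonal in the quotient symplectic space H|A := A^⊥/A with the bilinear form induced by ω; that is, the contraction of a Lagrangian subspace along an isotropic subspace is again Lagrangian. -/
/-!
Since `A` is isotropic, the modular law rewrites the contraction `(L + A) ∩ A^⊥` as
`(L ∩ A^⊥) + A`. In finite dimension `⊥` is an involution exchanging `∩` and `+`, so the orthogonal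
of the contraction, cut down to `A^⊥`, is `(L^⊥ + A) ∩ A^⊥`: the contraction of `L^⊥`.
For a Lagrangian `L = L^⊥` this is the contraction of `L` itself.
-/

namespace LinearMap.BilinForm

section CommSemiring

variable {R M : Type*} [CommSemiring R] [AddCommMonoid M] [Module R M]
  (B : LinearMap.BilinForm R M)

theorem orthogonal_sup (N N' : Submodule R M) :
    B.orthogonal (N ⊔ N') = B.orthogonal N ⊓ B.orthogonal N' := by
  ext x
  refine ⟨fun hx => ⟨fun n hn => hx n (Submodule.mem_sup_left hn),
    fun n' hn' => hx n' (Submodule.mem_sup_right hn')⟩, ?_⟩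
  rintro ⟨hN, hN'⟩ y hy
  obtain ⟨n, hn, n', hn', rfl⟩ := Submodule.mem_sup.mp hy
  simp only [map_add, LinearMap.add_apply, hN n hn, hN' n' hn', add_zero]

/-- The contraction `L|A = ((L + A) ∩ A^⊥) / A`, represented by its preimage in `A^⊥`. -/
def contraction (A L : Submodule R M) : Submodule R M :=
  (L ⊔ A) ⊓ B.orthogonal A

end CommSemiring

section CommRing

variable {R M : Type*} [CommRing R] [AddCommGroup M] [Module R M]
  {B : LinearMap.BilinForm R M}

theorem contraction_eq_inf_sup {A : Submodule R M} (hA : A ≤ B.orthogonal A)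
    (L : Submodule R M) : B.contraction A L = L ⊓ B.orthogonal A ⊔ A := by
  rw [contraction, sup_comm L A, sup_comm _ A]
  exact sup_inf_assoc_of_le L hA

end CommRing

section FiniteDimensional

variable {K V : Type*} [Field K] [AddCommGroup V] [Module K V] [FiniteDimensional K V]
  {B : LinearMap.BilinForm K V}

theorem orthogonal_inf (hB : B.Nondegenerate) (hB₀ : B.IsRefl) (N N' : Submodule K V) :
    B.orthogonal (N ⊓ N') = B.orthogonal N ⊔ B.orthogonal N' := by
  conv_lhs => rw [← orthogonal_orthogonal hB hB₀ N, ← orthogonal_orthogonal hB hB₀ N',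
    ← orthogonal_sup]
  exact orthogonal_orthogonal hB hB₀ _

theorem orthogonal_contraction_inf_orthogonal (hB : B.Nondegenerate) (hB₀ : B.IsRefl)
    {A : Submodule K V} (hA : A ≤ B.orthogonal A) (L : Submodule K V) :
    B.orthogonal (B.contraction A L) ⊓ B.orthogonal A = B.contraction A (B.orthogonal L) := by
  rw [contraction_eq_inf_sup hA, orthogonal_sup, orthogonal_inf hB hB₀,
    orthogonal_orthogonal hB hB₀, inf_assoc, inf_idem]
  rfl

end FiniteDimensional

end LinearMap.BilinForm

/-- Let `A` be an isotropic subspace and `L` a Lagrangian subspace of a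
finite-dimensional real symplectic space `(H, ω)`. Then
`((L + A) ∩ A^⊥)^⊥ ∩ A^⊥ = (L + A) ∩ A^⊥`, i.e. the contraction of a Lagrangian subspace
along an isotropic subspace equals its own orthogonal in the quotient symplectic space
`A^⊥/A`: the contraction of a Lagrangian subspace along an isotropic subspace is Lagrangian. -/
theorem contraction_of_lagrangian_is_lagrangian
    {H : Type*} [AddCommGroup H] [Module ℝ H] [FiniteDimensional ℝ H]
    (ω : LinearMap.BilinForm ℝ H)
    (hanti : ∀ x y : H, ω x y = -ω y x)
    (hnd : ∀ x : H, (∀ y : H, ω x y = 0) → x = 0)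
    (A L : Submodule ℝ H)
    (hA : A ≤ LinearMap.BilinForm.orthogonal ω A)
    (hL : L = LinearMap.BilinForm.orthogonal ω L) :
    LinearMap.BilinForm.orthogonal ω ((L ⊔ A) ⊓ LinearMap.BilinForm.orthogonal ω A) ⊓
        LinearMap.BilinForm.orthogonal ω A =
      (L ⊔ A) ⊓ LinearMap.BilinForm.orthogonal ω A := by
  have hrefl : ω.IsRefl := fun x y h => by rw [hanti, h, neg_zero]
  have hndg : ω.Nondegenerate := hrefl.nondegenerate_iff_separatingLeft.mpr hnd
  have h := LinearMap.BilinForm.orthogonal_contraction_inf_orthogonal hndg hrefl hA L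
  rwa [← hL] at h
end

section
/- Let L1, L2, L3 be Lagrangian subspaces of H. There exists a unique bilinear form ⟨·,·⟩ on the quotient space W(L1, L2, L3) such that ⟨[a1], [b2 + b3]⟩ = ω(a1, b2) whenever a1 ∈ L1 ∩ (L2 + L3), b2 ∈ L2, b3 ∈ L3 and b2 + b3 ∈ L1. Moreover, this bilinear form is symmetric: ⟨w, w'⟩ = ⟨w', w⟩ for all w, w' ∈ W(L1, L2, L3). (This is the Maslov form associated with the Lagrangian subspaces L1, L2, L3.) -/
/-!
For `a ∈ L₂ + L₃` and `b = b₂ + b₃` with `bᵢ ∈ Lᵢ`, the value `ω a b₂` does not depend on the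
splitting of `b`: two splittings differ by an element of `L₂ ∩ L₃`, which is `ω`-orthogonal to
`L₂ + L₃` because `L₂` and `L₃` are isotropic. A linear choice of the `L₂`-component thus gives a
bilinear form on `L₁ ∩ (L₂ + L₃)`, and isotropy of `L₁`, `L₂`, `L₃` shows that it vanishes on
`(L₁ ∩ L₂) + (L₁ ∩ L₃)` in either argument, so it descends to `W`. It is unique because the classes
`[b₂ + b₃]` exhaust `W`. It is symmetric because expanding `ω (a₂ + a₃) (b₂ + b₃) = 0` and using
`ω a₂ b₂ = ω a₃ b₃ = 0` gives `ω a₃ b₂ = -ω a₂ b₃ = ω b₃ a₂`.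
-/

open LinearMap (BilinForm)

section QuotientLift

variable {R M N P : Type*} [CommRing R] [AddCommGroup M] [Module R M] [AddCommGroup N]
  [Module R N] [AddCommGroup P] [Module R P]

theorem LinearMap.exists_liftQ₂ (f : M →ₗ[R] N →ₗ[R] P) (p : Submodule R M) (q : Submodule R N)
    (hp : ∀ m ∈ p, ∀ n, f m n = 0) (hq : ∀ m, ∀ n ∈ q, f m n = 0) :
    ∃ g : M ⧸ p →ₗ[R] N ⧸ q →ₗ[R] P, ∀ m n, g (p.mkQ m) (q.mkQ n) = f m n := by
  let f₁ : M ⧸ p →ₗ[R] N →ₗ[R] P := p.liftQ f fun m hm => LinearMap.ext (hp m hm)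
  let g : N ⧸ q →ₗ[R] M ⧸ p →ₗ[R] P := q.liftQ f₁.flip fun n hn =>
    LinearMap.ext fun m => Submodule.Quotient.induction_on _ m fun m => hq m n hn
  exact ⟨g.flip, fun m n => rfl⟩

end QuotientLift

section Lagrangian

variable {𝕜 H : Type*} [Field 𝕜] [AddCommGroup H] [Module 𝕜 H]

theorem Submodule.exists_linearMap_sup_component (L₂ L₃ : Submodule 𝕜 H) :
    ∃ r : ↥(L₂ ⊔ L₃) →ₗ[𝕜] L₂, ∀ x : ↥(L₂ ⊔ L₃), (x : H) - r x ∈ L₃ := by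
  let s : L₂ × L₃ →ₗ[𝕜] ↥(L₂ ⊔ L₃) := (L₂.subtype.coprod L₃.subtype).codRestrict _
    fun p => Submodule.add_mem_sup p.1.2 p.2.2
  have hs : Function.Surjective s := by
    rintro ⟨x, hx⟩
    obtain ⟨y, hy, z, hz, rfl⟩ := Submodule.mem_sup.mp hx
    exact ⟨(⟨y, hy⟩, ⟨z, hz⟩), rfl⟩
  obtain ⟨g, hg⟩ := s.exists_rightInverse_of_surjective (LinearMap.range_eq_top.mpr hs)
  refine ⟨LinearMap.fst _ _ _ ∘ₗ g, fun x => ?_⟩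
  have hx : ((g x).1 : H) + (g x).2 = x := congrArg Subtype.val (LinearMap.congr_fun hg x)
  simp [← hx]

namespace LinearMap.BilinForm

variable (ω : BilinForm 𝕜 H) {L₁ L₂ L₃ : Submodule 𝕜 H}

theorem apply_eq_zero_of_le_orthogonal {L : Submodule 𝕜 H} (hL : L ≤ ω.orthogonal L) {x y : H}
    (hx : x ∈ L) (hy : y ∈ L) : ω x y = 0 :=
  hL hy x hx

variable {ω}

theorem apply_eq_zero_of_mem_sup_of_mem_inf (h₂ : L₂ ≤ ω.orthogonal L₂)
    (h₃ : L₃ ≤ ω.orthogonal L₃) {a c : H} (ha : a ∈ L₂ ⊔ L₃) (hc : c ∈ L₂ ⊓ L₃) : ω a c = 0 := by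
  obtain ⟨a₂, ha₂, a₃, ha₃, rfl⟩ := Submodule.mem_sup.mp ha
  rw [map_add, LinearMap.add_apply, ω.apply_eq_zero_of_le_orthogonal h₂ ha₂ hc.1,
    ω.apply_eq_zero_of_le_orthogonal h₃ ha₃ hc.2, add_zero]

theorem apply_eq_of_add_eq_add (h₂ : L₂ ≤ ω.orthogonal L₂) (h₃ : L₃ ≤ ω.orthogonal L₃)
    {a b₂ b₃ b₂' b₃' : H} (ha : a ∈ L₂ ⊔ L₃) (hb₂ : b₂ ∈ L₂) (hb₃ : b₃ ∈ L₃) (hb₂' : b₂' ∈ L₂)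
    (hb₃' : b₃' ∈ L₃) (h : b₂ + b₃ = b₂' + b₃') : ω a b₂ = ω a b₂' := by
  have hL₃ : b₂ - b₂' ∈ L₃ := by
    rw [sub_eq_sub_iff_add_eq_add.mpr (h.trans (add_comm _ _))]
    exact sub_mem hb₃' hb₃
  rw [← sub_eq_zero, ← map_sub]
  exact apply_eq_zero_of_mem_sup_of_mem_inf h₂ h₃ ha ⟨sub_mem hb₂ hb₂', hL₃⟩

theorem exists_bilinForm_sup_apply_eq (h₂ : L₂ ≤ ω.orthogonal L₂) (h₃ : L₃ ≤ ω.orthogonal L₃) :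
    ∃ B : BilinForm 𝕜 ↥(L₂ ⊔ L₃), ∀ a b : ↥(L₂ ⊔ L₃), ∀ b₂ ∈ L₂, ∀ b₃ ∈ L₃,
      (b : H) = b₂ + b₃ → B a b = ω a b₂ := by
  obtain ⟨r, hr⟩ := L₂.exists_linearMap_sup_component L₃
  refine ⟨ω.compl₁₂ (L₂ ⊔ L₃).subtype (L₂.subtype ∘ₗ r), fun a b b₂ hb₂ b₃ hb₃ hb => ?_⟩
  exact apply_eq_of_add_eq_add h₂ h₃ a.2 (r b).2 (hr b) hb₂ hb₃ ((add_sub_cancel _ _).trans hb)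

theorem apply_add_eq_apply_add (hanti : ∀ x y : H, ω x y = -ω y x) (h₁ : L₁ ≤ ω.orthogonal L₁)
    (h₂ : L₂ ≤ ω.orthogonal L₂) (h₃ : L₃ ≤ ω.orthogonal L₃) {a₂ a₃ b₂ b₃ : H} (ha₂ : a₂ ∈ L₂)
    (ha₃ : a₃ ∈ L₃) (hb₂ : b₂ ∈ L₂) (hb₃ : b₃ ∈ L₃) (ha : a₂ + a₃ ∈ L₁) (hb : b₂ + b₃ ∈ L₁) :
    ω (a₂ + a₃) b₂ = ω (b₂ + b₃) a₂ := by
  have h₁₁ := ω.apply_eq_zero_of_le_orthogonal h₁ ha hb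
  have h₂₂' := ω.apply_eq_zero_of_le_orthogonal h₂ hb₂ ha₂
  have h₃₃ := ω.apply_eq_zero_of_le_orthogonal h₃ ha₃ hb₃
  simp only [map_add, LinearMap.add_apply] at h₁₁ ⊢
  linear_combination h₁₁ - h₃₃ - h₂₂' - hanti b₃ a₂

end LinearMap.BilinForm

open LinearMap.BilinForm

/-- The space `W(L₁, L₂, L₃)`. -/
abbrev MaslovSpace (L₁ L₂ L₃ : Submodule 𝕜 H) : Type _ :=
  ↥(L₁ ⊓ (L₂ ⊔ L₃)) ⧸ Submodule.comap (L₁ ⊓ (L₂ ⊔ L₃)).subtype ((L₁ ⊓ L₂) ⊔ (L₁ ⊓ L₃))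

def IsMaslovForm (ω : BilinForm 𝕜 H) (L₁ L₂ L₃ : Submodule 𝕜 H)
    (β : BilinForm 𝕜 (MaslovSpace L₁ L₂ L₃)) : Prop :=
  ∀ (a₁ : H) (ha₁ : a₁ ∈ L₁ ⊓ (L₂ ⊔ L₃)) (b₂ b₃ : H) (hb₂ : b₂ ∈ L₂) (hb₃ : b₃ ∈ L₃)
    (hb₁ : b₂ + b₃ ∈ L₁),
    β (Submodule.Quotient.mk ⟨a₁, ha₁⟩)
        (Submodule.Quotient.mk
          ⟨b₂ + b₃, Submodule.mem_inf.mpr ⟨hb₁, Submodule.add_mem_sup hb₂ hb₃⟩⟩) =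
      ω a₁ b₂

variable {ω : BilinForm 𝕜 H} {L₁ L₂ L₃ : Submodule 𝕜 H}
  {β β' : BilinForm 𝕜 (MaslovSpace L₁ L₂ L₃)}

theorem IsMaslovForm.apply_mk (hβ : IsMaslovForm ω L₁ L₂ L₃ β) (a b : ↥(L₁ ⊓ (L₂ ⊔ L₃)))
    {b₂ b₃ : H} (hb₂ : b₂ ∈ L₂) (hb₃ : b₃ ∈ L₃) (hb : (b : H) = b₂ + b₃) :
    β (Submodule.Quotient.mk a) (Submodule.Quotient.mk b) = ω a b₂ := by
  obtain ⟨b, hbV⟩ := b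
  subst hb
  exact hβ a a.2 b₂ b₃ hb₂ hb₃ hbV.1

theorem IsMaslovForm.unique (hβ : IsMaslovForm ω L₁ L₂ L₃ β) (hβ' : IsMaslovForm ω L₁ L₂ L₃ β') :
    β = β' := by
  refine LinearMap.ext fun w => LinearMap.ext fun w' => ?_
  induction w using Submodule.Quotient.induction_on with | _ a
  induction w' using Submodule.Quotient.induction_on with | _ b
  obtain ⟨b₂, hb₂, b₃, hb₃, hb⟩ := Submodule.mem_sup.mp b.2.2
  rw [hβ.apply_mk a b hb₂ hb₃ hb.symm, hβ'.apply_mk a b hb₂ hb₃ hb.symm]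

theorem IsMaslovForm.symm (hanti : ∀ x y : H, ω x y = -ω y x) (h₁ : L₁ ≤ ω.orthogonal L₁)
    (h₂ : L₂ ≤ ω.orthogonal L₂) (h₃ : L₃ ≤ ω.orthogonal L₃) (hβ : IsMaslovForm ω L₁ L₂ L₃ β)
    (w w' : MaslovSpace L₁ L₂ L₃) : β w w' = β w' w := by
  induction w using Submodule.Quotient.induction_on with | _ a
  induction w' using Submodule.Quotient.induction_on with | _ b
  obtain ⟨a₂, ha₂, a₃, ha₃, ha⟩ := Submodule.mem_sup.mp a.2.2
  obtain ⟨b₂, hb₂, b₃, hb₃, hb⟩ := Submodule.mem_sup.mp b.2.2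
  rw [hβ.apply_mk a b hb₂ hb₃ hb.symm, hβ.apply_mk b a ha₂ ha₃ ha.symm, ← ha, ← hb]
  exact apply_add_eq_apply_add hanti h₁ h₂ h₃ ha₂ ha₃ hb₂ hb₃ (ha ▸ a.2.1) (hb ▸ b.2.1)

theorem exists_isMaslovForm (h₁ : L₁ ≤ ω.orthogonal L₁) (h₂ : L₂ ≤ ω.orthogonal L₂)
    (h₃ : L₃ ≤ ω.orthogonal L₃) : ∃ β, IsMaslovForm ω L₁ L₂ L₃ β := by
  obtain ⟨B, hB⟩ := exists_bilinForm_sup_apply_eq h₂ h₃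
  let ι := Submodule.inclusion (inf_le_right : L₁ ⊓ (L₂ ⊔ L₃) ≤ L₂ ⊔ L₃)
  have hB' : ∀ a b : ↥(L₁ ⊓ (L₂ ⊔ L₃)), ∀ b₂ ∈ L₂, ∀ b₃ ∈ L₃, (b : H) = b₂ + b₃ →
      B (ι a) (ι b) = ω a b₂ := fun a b => hB (ι a) (ι b)
  have hleft : ∀ k ∈ Submodule.comap (L₁ ⊓ (L₂ ⊔ L₃)).subtype ((L₁ ⊓ L₂) ⊔ (L₁ ⊓ L₃)),
      ∀ b, B (ι k) (ι b) = 0 := by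
    intro k hk b
    obtain ⟨k₂, hk₂, k₃, hk₃, hk⟩ := Submodule.mem_sup.mp hk
    obtain ⟨b₂, hb₂, b₃, hb₃, hb⟩ := Submodule.mem_sup.mp b.2.2
    have hk₃b₂ : ω k₃ b₂ = 0 := by
      rw [← add_sub_cancel_right b₂ b₃, hb, map_sub,
        ω.apply_eq_zero_of_le_orthogonal h₁ hk₃.1 b.2.1,
        ω.apply_eq_zero_of_le_orthogonal h₃ hk₃.2 hb₃, sub_zero]
    rw [hB' k b b₂ hb₂ b₃ hb₃ hb.symm, show (k : H) = k₂ + k₃ from hk.symm, map_add,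
      LinearMap.add_apply, ω.apply_eq_zero_of_le_orthogonal h₂ hk₂.2 hb₂, hk₃b₂, add_zero]
  have hright : ∀ a, ∀ k ∈ Submodule.comap (L₁ ⊓ (L₂ ⊔ L₃)).subtype ((L₁ ⊓ L₂) ⊔ (L₁ ⊓ L₃)),
      B (ι a) (ι k) = 0 := by
    intro a k hk
    obtain ⟨k₂, hk₂, k₃, hk₃, hk⟩ := Submodule.mem_sup.mp hk
    rw [hB' a k k₂ hk₂.2 k₃ hk₃.2 hk.symm]
    exact ω.apply_eq_zero_of_le_orthogonal h₁ a.2.1 hk₂.1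
  obtain ⟨β, hβ⟩ := LinearMap.exists_liftQ₂ (B.compl₁₂ ι ι) _ _ hleft hright
  exact ⟨β, fun a ha b₂ b₃ hb₂ hb₃ _ => (hβ _ _).trans (hB' _ _ b₂ hb₂ b₃ hb₃ rfl)⟩

end Lagrangian

theorem maslov_form_exists_unique_and_symm_general
    {H : Type*} [AddCommGroup H] [Module ℝ H]
    (ω : LinearMap.BilinForm ℝ H)
    (hanti : ∀ x y : H, ω x y = -ω y x)
    (L1 L2 L3 : Submodule ℝ H)
    (h1 : L1 = LinearMap.BilinForm.orthogonal ω L1)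
    (h2 : L2 = LinearMap.BilinForm.orthogonal ω L2)
    (h3 : L3 = LinearMap.BilinForm.orthogonal ω L3) :
    (∃! β : LinearMap.BilinForm ℝ
        (↥(L1 ⊓ (L2 ⊔ L3)) ⧸
          Submodule.comap (L1 ⊓ (L2 ⊔ L3)).subtype ((L1 ⊓ L2) ⊔ (L1 ⊓ L3))),
      ∀ (a1 : H) (ha1 : a1 ∈ L1 ⊓ (L2 ⊔ L3)) (b2 b3 : H) (hb2 : b2 ∈ L2) (hb3 : b3 ∈ L3)
        (hb1 : b2 + b3 ∈ L1),
        β (Submodule.Quotient.mk ⟨a1, ha1⟩)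
            (Submodule.Quotient.mk
              ⟨b2 + b3, Submodule.mem_inf.mpr ⟨hb1, Submodule.add_mem_sup hb2 hb3⟩⟩) =
          ω a1 b2) ∧
    ∀ β : LinearMap.BilinForm ℝ
        (↥(L1 ⊓ (L2 ⊔ L3)) ⧸
          Submodule.comap (L1 ⊓ (L2 ⊔ L3)).subtype ((L1 ⊓ L2) ⊔ (L1 ⊓ L3))),
      (∀ (a1 : H) (ha1 : a1 ∈ L1 ⊓ (L2 ⊔ L3)) (b2 b3 : H) (hb2 : b2 ∈ L2) (hb3 : b3 ∈ L3)
        (hb1 : b2 + b3 ∈ L1),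
        β (Submodule.Quotient.mk ⟨a1, ha1⟩)
            (Submodule.Quotient.mk
              ⟨b2 + b3, Submodule.mem_inf.mpr ⟨hb1, Submodule.add_mem_sup hb2 hb3⟩⟩) =
          ω a1 b2) →
      ∀ w w', β w w' = β w' w := by
  obtain ⟨β, hβ⟩ := exists_isMaslovForm h1.le h2.le h3.le
  exact ⟨⟨β, hβ, fun β' hβ' => IsMaslovForm.unique hβ' hβ⟩,
    fun β' hβ' => IsMaslovForm.symm hanti h1.le h2.le h3.le hβ'⟩

/-- For Lagrangian subspaces `L1, L2, L3` of a finite-dimensional real vector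
space `H` with antisymmetric bilinear form `ω`, there is a unique bilinear form on
`W(L1, L2, L3) = (L1 ∩ (L2 + L3)) / ((L1 ∩ L2) + (L1 ∩ L3))` satisfying
`⟨[a1], [b2 + b3]⟩ = ω a1 b2` whenever `a1 ∈ L1 ∩ (L2 + L3)`, `b2 ∈ L2`, `b3 ∈ L3` and
`b2 + b3 ∈ L1`; moreover this bilinear form is symmetric (the Maslov form). -/
theorem maslov_form_exists_unique_and_symm
    {H : Type*} [AddCommGroup H] [Module ℝ H] [FiniteDimensional ℝ H]
    (ω : LinearMap.BilinForm ℝ H)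
    (hanti : ∀ x y : H, ω x y = -ω y x)
    (L1 L2 L3 : Submodule ℝ H)
    (h1 : L1 = LinearMap.BilinForm.orthogonal ω L1)
    (h2 : L2 = LinearMap.BilinForm.orthogonal ω L2)
    (h3 : L3 = LinearMap.BilinForm.orthogonal ω L3) :
    (∃! β : LinearMap.BilinForm ℝ
        (↥(L1 ⊓ (L2 ⊔ L3)) ⧸
          Submodule.comap (L1 ⊓ (L2 ⊔ L3)).subtype ((L1 ⊓ L2) ⊔ (L1 ⊓ L3))),
      ∀ (a1 : H) (ha1 : a1 ∈ L1 ⊓ (L2 ⊔ L3)) (b2 b3 : H) (hb2 : b2 ∈ L2) (hb3 : b3 ∈ L3)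
        (hb1 : b2 + b3 ∈ L1),
        β (Submodule.Quotient.mk ⟨a1, ha1⟩)
            (Submodule.Quotient.mk
              ⟨b2 + b3, Submodule.mem_inf.mpr ⟨hb1, Submodule.add_mem_sup hb2 hb3⟩⟩) =
          ω a1 b2) ∧
    ∀ β : LinearMap.BilinForm ℝ
        (↥(L1 ⊓ (L2 ⊔ L3)) ⧸
          Submodule.comap (L1 ⊓ (L2 ⊔ L3)).subtype ((L1 ⊓ L2) ⊔ (L1 ⊓ L3))),
      (∀ (a1 : H) (ha1 : a1 ∈ L1 ⊓ (L2 ⊔ L3)) (b2 b3 : H) (hb2 : b2 ∈ L2) (hb3 : b3 ∈ L3)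
        (hb1 : b2 + b3 ∈ L1),
        β (Submodule.Quotient.mk ⟨a1, ha1⟩)
            (Submodule.Quotient.mk
              ⟨b2 + b3, Submodule.mem_inf.mpr ⟨hb1, Submodule.add_mem_sup hb2 hb3⟩⟩) =
          ω a1 b2) →
      ∀ w w', β w w' = β w' w :=
  maslov_form_exists_unique_and_symm_general ω hanti L1 L2 L3 h1 h2 h3
end

section
/- Let L1, L2, L3 be Lagrangian subspaces of H. If a2 ∈ L1 ∩ L2 and a3 ∈ L1 ∩ L3, and if b1 ∈ L1, b2 ∈ L2, b3 ∈ L3 satisfy b1 = b2 + b3, then ω(a2 + a3, b2) = 0. (This is the vanishing of the Maslov pairing when its first argument lies in (L1 ∩ L2) + (L1 ∩ L3), i.e. the well-definedness of the Maslov form in its first variable.) -/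
/-- For Lagrangian subspaces `L1, L2, L3` of `(H, ω)`, if `a2 ∈ L1 ∩ L2`,
`a3 ∈ L1 ∩ L3`, and `b1 ∈ L1`, `b2 ∈ L2`, `b3 ∈ L3` satisfy `b1 = b2 + b3`, then
`ω (a2 + a3) b2 = 0` (well-definedness of the Maslov form in its first variable). -/
theorem maslov_pairing_vanishes_on_denominator
    {H : Type*} [AddCommGroup H] [Module ℝ H] [FiniteDimensional ℝ H]
    (ω : LinearMap.BilinForm ℝ H)
    (hanti : ∀ x y : H, ω x y = -ω y x)
    (L1 L2 L3 : Submodule ℝ H)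
    (h1 : L1 = LinearMap.BilinForm.orthogonal ω L1)
    (h2 : L2 = LinearMap.BilinForm.orthogonal ω L2)
    (h3 : L3 = LinearMap.BilinForm.orthogonal ω L3)
    (a2 a3 b1 b2 b3 : H)
    (ha2 : a2 ∈ L1 ⊓ L2) (ha3 : a3 ∈ L1 ⊓ L3)
    (hb1 : b1 ∈ L1) (hb2 : b2 ∈ L2) (hb3 : b3 ∈ L3)
    (hb : b1 = b2 + b3) :
    ω (a2 + a3) b2 = 0 := by
  have key : ∀ (L : Submodule ℝ H), L = LinearMap.BilinForm.orthogonal ω L →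
      ∀ x ∈ L, ∀ y ∈ L, ω x y = 0 := by
    intro L hL x hx y hy
    have : y ∈ LinearMap.BilinForm.orthogonal ω L := hL ▸ hy
    exact this x hx
  have h22 : ω a2 b2 = 0 := key L2 h2 a2 ha2.2 b2 hb2
  have h31 : ω a3 b1 = 0 := key L1 h1 a3 ha3.1 b1 hb1
  have h33 : ω a3 b3 = 0 := key L3 h3 a3 ha3.2 b3 hb3
  have h32 : ω a3 b2 = 0 := by
    have : ω a3 b1 = ω a3 b2 + ω a3 b3 := by rw [hb, map_add]
    linarith
  simp [map_add, LinearMap.add_apply, h22, h32]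
end

section
/- Let L1, L2, L3 be Lagrangian subspaces of H. If a1 ∈ L1, a2 ∈ L2, a3 ∈ L3 satisfy a1 = a2 + a3, and b1 ∈ L1, b2 ∈ L2, b3 ∈ L3 satisfy b1 = b2 + b3, then ω(a1, b2) = ω(b1, a2). (Symmetry of the Maslov form.) -/
/-- For Lagrangian subspaces `L1, L2, L3` of `(H, ω)`, if `a1 ∈ L1`, `a2 ∈ L2`,
`a3 ∈ L3` satisfy `a1 = a2 + a3`, and `b1 ∈ L1`, `b2 ∈ L2`, `b3 ∈ L3` satisfy
`b1 = b2 + b3`, then `ω a1 b2 = ω b1 a2` (symmetry of the Maslov form). -/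
theorem maslov_form_symmetric
    {H : Type*} [AddCommGroup H] [Module ℝ H] [FiniteDimensional ℝ H]
    (ω : LinearMap.BilinForm ℝ H)
    (hanti : ∀ x y : H, ω x y = -ω y x)
    (L1 L2 L3 : Submodule ℝ H)
    (h1 : L1 = LinearMap.BilinForm.orthogonal ω L1)
    (h2 : L2 = LinearMap.BilinForm.orthogonal ω L2)
    (h3 : L3 = LinearMap.BilinForm.orthogonal ω L3)
    (a1 a2 a3 b1 b2 b3 : H)
    (ha1 : a1 ∈ L1) (ha2 : a2 ∈ L2) (ha3 : a3 ∈ L3)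
    (hb1 : b1 ∈ L1) (hb2 : b2 ∈ L2) (hb3 : b3 ∈ L3)
    (ha : a1 = a2 + a3) (hb : b1 = b2 + b3) :
    ω a1 b2 = ω b1 a2 := by
  rw [h1] at hb1
  rw [h2] at hb2
  rw [h3] at hb3
  have f1 : ω a1 b1 = 0 := hb1 a1 ha1
  have f2 : ω a2 b2 = 0 := hb2 a2 ha2
  have f3 : ω a3 b3 = 0 := hb3 a3 ha3
  have fa : ω a1 b2 + ω a1 b3 = ω a1 b1 := by rw [hb]; simp
  have fb : ω a2 b3 + ω a3 b3 = ω a1 b3 := by rw [ha]; simp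
  have fc : ω a2 b2 + ω a2 b3 = ω a2 b1 := by rw [hb]; simp
  have fs : ω b1 a2 = -ω a2 b1 := hanti b1 a2
  linarith
end

section
/- Let L1, L2, L3 be Lagrangian subspaces of H. There is a well-defined linear isomorphism from W(L1, L2, L3) to W(L2, L1, L3) which sends the class [a2 + a3] in W(L1, L2, L3) to the class [a2] in W(L2, L1, L3) whenever a2 ∈ L2 and a3 ∈ L3 satisfy a2 + a3 ∈ L1. -/
open Submodule LinearMap

theorem maslov_aux {H : Type*} [AddCommGroup H] [Module ℝ H]
    (L1 L2 L3 : Submodule ℝ H) :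
    ∃ f : (↥(L1 ⊓ (L2 ⊔ L3)) ⧸
            Submodule.comap (L1 ⊓ (L2 ⊔ L3)).subtype ((L1 ⊓ L2) ⊔ (L1 ⊓ L3))) →ₗ[ℝ]
          (↥(L2 ⊓ (L1 ⊔ L3)) ⧸
            Submodule.comap (L2 ⊓ (L1 ⊔ L3)).subtype ((L2 ⊓ L1) ⊔ (L2 ⊓ L3))),
      ∀ (a2 a3 : H) (ha2 : a2 ∈ L2) (ha3 : a3 ∈ L3) (ha1 : a2 + a3 ∈ L1),
        f (Submodule.Quotient.mk
            ⟨a2 + a3, Submodule.mem_inf.mpr ⟨ha1, Submodule.add_mem_sup ha2 ha3⟩⟩) =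
          Submodule.Quotient.mk
            ⟨a2, Submodule.mem_inf.mpr
              ⟨ha2, by simpa using Submodule.add_mem_sup ha1 (neg_mem ha3)⟩⟩ := by
  set M1 := L1 ⊓ (L2 ⊔ L3) with hM1
  set M2 := L2 ⊓ (L1 ⊔ L3) with hM2
  set D1 := Submodule.comap M1.subtype ((L1 ⊓ L2) ⊔ (L1 ⊓ L3)) with hD1
  set D2 := Submodule.comap M2.subtype ((L2 ⊓ L1) ⊔ (L2 ⊓ L3)) with hD2
  set S : Submodule ℝ (H × H) :=
    (L2.prod L3) ⊓ Submodule.comap (LinearMap.fst ℝ H H + LinearMap.snd ℝ H H) L1 with hS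
  have hSmem : ∀ s : S, (s : H × H).1 ∈ L2 ∧ (s : H × H).2 ∈ L3 ∧
      (s : H × H).1 + (s : H × H).2 ∈ L1 := by
    rintro ⟨⟨x, y⟩, hs⟩
    obtain ⟨⟨hx, hy⟩, h1⟩ := hs
    exact ⟨hx, hy, h1⟩
  set p0 : S →ₗ[ℝ] M1 := LinearMap.codRestrict M1
      ((LinearMap.fst ℝ H H + LinearMap.snd ℝ H H).comp S.subtype)
      (fun s => by
        obtain ⟨hx, hy, h1⟩ := hSmem s
        exact Submodule.mem_inf.mpr ⟨h1, Submodule.add_mem_sup hx hy⟩) with hp0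
  set q : S →ₗ[ℝ] (M2 ⧸ D2) := D2.mkQ.comp (LinearMap.codRestrict M2
      ((LinearMap.fst ℝ H H).comp S.subtype)
      (fun s => by
        obtain ⟨hx, hy, h1⟩ := hSmem s
        refine Submodule.mem_inf.mpr ⟨hx, ?_⟩
        simpa using Submodule.add_mem_sup h1 (neg_mem hy))) with hq
  set π : S →ₗ[ℝ] (M1 ⧸ D1) := D1.mkQ.comp p0 with hπ
  have hsurj : Function.Surjective π := by
    intro w
    obtain ⟨y, rfl⟩ := Submodule.mkQ_surjective D1 w
    obtain ⟨h1y, hsy⟩ := Submodule.mem_inf.mp y.2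
    obtain ⟨a2, ha2, a3, ha3, hsum⟩ := Submodule.mem_sup.mp hsy
    refine ⟨⟨(a2, a3), ⟨⟨ha2, ha3⟩, by simpa [hsum] using y.2.1⟩⟩, ?_⟩
    simp only [hπ, LinearMap.comp_apply]
    congr 1
    exact Subtype.ext hsum
  have hker : LinearMap.ker π ≤ LinearMap.ker q := by
    intro s hs
    simp only [hπ, LinearMap.mem_ker, LinearMap.comp_apply, Submodule.mkQ_apply,
      Submodule.Quotient.mk_eq_zero] at hs
    have hs' : (s : H × H).1 + (s : H × H).2 ∈ (L1 ⊓ L2) ⊔ (L1 ⊓ L3) := hs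
    obtain ⟨hx, hy, h1⟩ := hSmem s
    obtain ⟨u, hu, v, hv, huv⟩ := Submodule.mem_sup.mp hs'
    simp only [hq, LinearMap.mem_ker, LinearMap.comp_apply, Submodule.mkQ_apply,
      Submodule.Quotient.mk_eq_zero]
    show (s : H × H).1 ∈ (L2 ⊓ L1) ⊔ (L2 ⊓ L3)
    have hval : (s : H × H).1 = u + ((s : H × H).1 - u) := by abel
    rw [hval]
    refine Submodule.add_mem_sup (Submodule.mem_inf.mpr ⟨hu.2, hu.1⟩)
      (Submodule.mem_inf.mpr ⟨Submodule.sub_mem _ hx hu.2, ?_⟩)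
    have : (s : H × H).1 - u = v - (s : H × H).2 := by
      have := huv
      linear_combination (norm := module) -huv
    rw [this]
    exact Submodule.sub_mem _ hv.2 hy
  set e0 := π.quotKerEquivOfSurjective hsurj with he0
  refine ⟨((LinearMap.ker π).liftQ q hker).comp e0.symm.toLinearMap, ?_⟩
  intro a2 a3 ha2 ha3 ha1
  set s : S := ⟨(a2, a3), ⟨⟨ha2, ha3⟩, ha1⟩⟩ with hs
  have h1 : e0 (Submodule.Quotient.mk s) = π s := rfl
  have h2 : e0.symm (π s) = Submodule.Quotient.mk s := by
    rw [← h1, LinearEquiv.symm_apply_apply]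
  have hπs : π s = Submodule.Quotient.mk
      ⟨a2 + a3, Submodule.mem_inf.mpr ⟨ha1, Submodule.add_mem_sup ha2 ha3⟩⟩ := rfl
  simp only [LinearMap.comp_apply, LinearEquiv.coe_toLinearMap, ← hπs, h2,
    Submodule.liftQ_apply]
  rfl



/-- For Lagrangian subspaces `L1, L2, L3` of `(H, ω)`, there is a well-defined
linear isomorphism `W(L1, L2, L3) ≃ W(L2, L1, L3)` sending the class `[a2 + a3]` to the
class `[a2]` whenever `a2 ∈ L2` and `a3 ∈ L3` satisfy `a2 + a3 ∈ L1`. -/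
theorem maslov_space_transposition_iso
    {H : Type*} [AddCommGroup H] [Module ℝ H] [FiniteDimensional ℝ H]
    (ω : LinearMap.BilinForm ℝ H)
    (hanti : ∀ x y : H, ω x y = -ω y x)
    (L1 L2 L3 : Submodule ℝ H)
    (h1 : L1 = LinearMap.BilinForm.orthogonal ω L1)
    (h2 : L2 = LinearMap.BilinForm.orthogonal ω L2)
    (h3 : L3 = LinearMap.BilinForm.orthogonal ω L3) :
    ∃ e : (↥(L1 ⊓ (L2 ⊔ L3)) ⧸
            Submodule.comap (L1 ⊓ (L2 ⊔ L3)).subtype ((L1 ⊓ L2) ⊔ (L1 ⊓ L3))) ≃ₗ[ℝ]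
          (↥(L2 ⊓ (L1 ⊔ L3)) ⧸
            Submodule.comap (L2 ⊓ (L1 ⊔ L3)).subtype ((L2 ⊓ L1) ⊔ (L2 ⊓ L3))),
      ∀ (a2 a3 : H) (ha2 : a2 ∈ L2) (ha3 : a3 ∈ L3) (ha1 : a2 + a3 ∈ L1),
        e (Submodule.Quotient.mk
            ⟨a2 + a3, Submodule.mem_inf.mpr ⟨ha1, Submodule.add_mem_sup ha2 ha3⟩⟩) =
          Submodule.Quotient.mk
            ⟨a2, Submodule.mem_inf.mpr
              ⟨ha2, by simpa using Submodule.add_mem_sup ha1 (neg_mem ha3)⟩⟩ := by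
  obtain ⟨f, hf⟩ := maslov_aux L1 L2 L3
  obtain ⟨g, hg⟩ := maslov_aux L2 L1 L3
  have key1 : ∀ (a2 a3 : H) (ha2 : a2 ∈ L2) (ha3 : a3 ∈ L3) (ha1 : a2 + a3 ∈ L1),
      g (Submodule.Quotient.mk
          ⟨a2, Submodule.mem_inf.mpr
            ⟨ha2, by simpa using Submodule.add_mem_sup ha1 (neg_mem ha3)⟩⟩) =
        Submodule.Quotient.mk
          ⟨a2 + a3, Submodule.mem_inf.mpr ⟨ha1, Submodule.add_mem_sup ha2 ha3⟩⟩ := by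
    intro a2 a3 ha2 ha3 ha1
    have hmem : (a2 + a3) + (-a3) ∈ L2 := by simpa using ha2
    have := hg (a2 + a3) (-a3) ha1 (neg_mem ha3) hmem
    have heq1 : (⟨a2, Submodule.mem_inf.mpr
          ⟨ha2, by simpa using Submodule.add_mem_sup ha1 (neg_mem ha3)⟩⟩ :
          ↥(L2 ⊓ (L1 ⊔ L3))) =
        ⟨(a2 + a3) + (-a3), Submodule.mem_inf.mpr
          ⟨hmem, Submodule.add_mem_sup ha1 (neg_mem ha3)⟩⟩ := Subtype.ext (by simp)
    have heq2 : (⟨a2 + a3, Submodule.mem_inf.mpr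
          ⟨ha1, Submodule.add_mem_sup ha2 ha3⟩⟩ : ↥(L1 ⊓ (L2 ⊔ L3))) =
        ⟨a2 + a3, Submodule.mem_inf.mpr
          ⟨ha1, by simpa using Submodule.add_mem_sup hmem (neg_mem (neg_mem ha3))⟩⟩ :=
      Subtype.ext rfl
    rw [heq1, heq2]
    exact this
  have hgf : g.comp f = LinearMap.id := by
    apply LinearMap.ext
    intro w
    obtain ⟨y, rfl⟩ := Submodule.mkQ_surjective _ w
    obtain ⟨h1y, hsy⟩ := Submodule.mem_inf.mp y.2
    obtain ⟨a2, ha2, a3, ha3, hsum⟩ := Submodule.mem_sup.mp hsy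
    have ha1 : a2 + a3 ∈ L1 := by rw [hsum]; exact h1y
    have hy : y = ⟨a2 + a3, Submodule.mem_inf.mpr ⟨ha1, Submodule.add_mem_sup ha2 ha3⟩⟩ :=
      Subtype.ext hsum.symm
    simp only [LinearMap.comp_apply, LinearMap.id_apply, Submodule.mkQ_apply, hy,
      hf a2 a3 ha2 ha3 ha1, key1 a2 a3 ha2 ha3 ha1]
  have key2 : ∀ (b1 b3 : H) (hb1 : b1 ∈ L1) (hb3 : b3 ∈ L3) (hb2 : b1 + b3 ∈ L2),
      f (Submodule.Quotient.mk
          ⟨b1, Submodule.mem_inf.mpr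
            ⟨hb1, by simpa using Submodule.add_mem_sup hb2 (neg_mem hb3)⟩⟩) =
        Submodule.Quotient.mk
          ⟨b1 + b3, Submodule.mem_inf.mpr ⟨hb2, Submodule.add_mem_sup hb1 hb3⟩⟩ := by
    intro b1 b3 hb1 hb3 hb2
    have hmem : (b1 + b3) + (-b3) ∈ L1 := by simpa using hb1
    have := hf (b1 + b3) (-b3) hb2 (neg_mem hb3) hmem
    have heq1 : (⟨b1, Submodule.mem_inf.mpr
          ⟨hb1, by simpa using Submodule.add_mem_sup hb2 (neg_mem hb3)⟩⟩ :
          ↥(L1 ⊓ (L2 ⊔ L3))) =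
        ⟨(b1 + b3) + (-b3), Submodule.mem_inf.mpr
          ⟨hmem, Submodule.add_mem_sup hb2 (neg_mem hb3)⟩⟩ := Subtype.ext (by simp)
    have heq2 : (⟨b1 + b3, Submodule.mem_inf.mpr
          ⟨hb2, Submodule.add_mem_sup hb1 hb3⟩⟩ : ↥(L2 ⊓ (L1 ⊔ L3))) =
        ⟨b1 + b3, Submodule.mem_inf.mpr
          ⟨hb2, by simpa using Submodule.add_mem_sup hmem (neg_mem (neg_mem hb3))⟩⟩ :=
      Subtype.ext rfl
    rw [heq1, heq2]
    exact this
  have hfg : f.comp g = LinearMap.id := by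
    apply LinearMap.ext
    intro w
    obtain ⟨y, rfl⟩ := Submodule.mkQ_surjective _ w
    obtain ⟨h2y, hsy⟩ := Submodule.mem_inf.mp y.2
    obtain ⟨b1, hb1, b3, hb3, hsum⟩ := Submodule.mem_sup.mp hsy
    have hb2 : b1 + b3 ∈ L2 := by rw [hsum]; exact h2y
    have hy : y = ⟨b1 + b3, Submodule.mem_inf.mpr ⟨hb2, Submodule.add_mem_sup hb1 hb3⟩⟩ :=
      Subtype.ext hsum.symm
    simp only [LinearMap.comp_apply, LinearMap.id_apply, Submodule.mkQ_apply, hy,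
      hg b1 b3 hb1 hb3 hb2, key2 b1 b3 hb1 hb3 hb2]
  exact ⟨LinearEquiv.ofLinear f g hfg hgf, hf⟩
end

section
/- Let ω be an antisymmetric bilinear form on a real vector space H, let φ : P → H and ψ : H → Q be linear maps of real vector spaces satisfying the exactness condition ker ψ = im φ, and let β : Q × P → ℝ be a bilinear map such that β(ψ(a), p) = −ω(a, φ(p)) for all a ∈ H and p ∈ P, and such that β separates points of Q in its first variable (if β(q, p) = 0 for all p ∈ P, then q = 0). Then im φ is a Lagrangian subspace of (H, ω): (im φ)^⊥ = im φ. -/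
/-- Let `ω` be an antisymmetric bilinear form on a real vector space `H`, let
`φ : P → H` and `ψ : H → Q` be linear maps with `ker ψ = im φ`, and let `β : Q × P → ℝ` be a
bilinear map with `β (ψ a) p = -ω a (φ p)` for all `a ∈ H`, `p ∈ P`, separating points of `Q`
in its first variable. Then `im φ` is a Lagrangian subspace of `(H, ω)`:
`(im φ)^⊥ = im φ`. -/
theorem kernel_of_boundary_is_lagrangian
    {H P Q : Type*} [AddCommGroup H] [Module ℝ H]
    [AddCommGroup P] [Module ℝ P] [AddCommGroup Q] [Module ℝ Q]
    (ω : LinearMap.BilinForm ℝ H)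
    (hanti : ∀ x y : H, ω x y = -ω y x)
    (φ : P →ₗ[ℝ] H) (ψ : H →ₗ[ℝ] Q)
    (hexact : LinearMap.ker ψ = LinearMap.range φ)
    (β : Q →ₗ[ℝ] P →ₗ[ℝ] ℝ)
    (hβ : ∀ (a : H) (p : P), β (ψ a) p = -(ω a (φ p)))
    (hsep : ∀ q : Q, (∀ p : P, β q p = 0) → q = 0) :
    LinearMap.BilinForm.orthogonal ω (LinearMap.range φ) = LinearMap.range φ := by
  ext x
  constructor
  · intro hx
    rw [← hexact, LinearMap.mem_ker]
    apply hsep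
    intro p
    rw [hβ, hanti, neg_neg]
    exact hx (φ p) ⟨p, rfl⟩
  · rintro ⟨p, rfl⟩ y hy
    rw [← hexact] at hy
    have := hβ y p
    rw [LinearMap.mem_ker.mp hy, map_zero, LinearMap.zero_apply] at this
    simpa [LinearMap.BilinForm.IsOrtho] using this.symm
end

section
/- Let k be a field, let A and A' be linear categories over k, and let F : A → A' be a fully faithful linear functor. If the set of objects {F(x) : x an object of A} dominates A', then F is a Morita equivalence; that is, the induced linear functor F̂ : Kar(Mat(A)) → Kar(Mat(A')) between the completions is an equivalence of categories. -/
open CategoryTheory CategoryTheory.Idempotents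

/-!
Every object of `Kar(Mat(A'))` is a retract of its underlying matrix object `M`, and by
domination each entry of `M`, hence `M` itself, is a retract of `F̂(N)` for some `N : Mat(A)`.
So the image of `F̂` is retract-dense. Since `F̂` is fully faithful and `Kar(Mat(A))` is
idempotent complete, its essential image is closed under retracts: a retract `(i, r)` of `F̂(Z)`
splits the idempotent `F̂⁻¹(r ≫ i)` of `Z`, and the splitting object is sent to the retract.
-/

namespace CategoryTheory

open Limits

variable {C D : Type*} [Category C] [Category D]

noncomputable def Retract.biproduct [HasZeroMorphisms C] {J : Type*} {X Y : J → C}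
    [HasBiproduct X] [HasBiproduct Y] (h : ∀ j, Retract (X j) (Y j)) :
    Retract (⨁ X) (⨁ Y) where
  i := biproduct.map fun j => (h j).i
  r := biproduct.map fun j => (h j).r

namespace Functor

lemma essImage_of_retract_obj [IsIdempotentComplete C] (G : C ⥤ D) [G.Full] [G.Faithful]
    {X : D} {Z : C} (h : Retract X (G.obj Z)) : G.essImage X := by
  let q : Z ⟶ Z := G.preimage (h.r ≫ h.i)
  have hq : q ≫ q = q := G.map_injective (by simp [q])
  obtain ⟨W, i, p, hip, hpi⟩ := IsIdempotentComplete.idempotents_split Z q hq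
  have hpi' : h.r ≫ h.i = G.map p ≫ G.map i := by rw [← G.map_comp, hpi, G.map_preimage]
  refine ⟨W, ⟨⟨G.map i ≫ h.r, h.i ≫ G.map p, ?_, ?_⟩⟩⟩
  · calc (G.map i ≫ h.r) ≫ h.i ≫ G.map p = G.map ((i ≫ p) ≫ i ≫ p) := by
          simp [reassoc_of% hpi']
      _ = 𝟙 _ := by simp [hip]
  · simp [← reassoc_of% hpi']

instance essImage_isStableUnderRetracts [IsIdempotentComplete C] (G : C ⥤ D) [G.Full]
    [G.Faithful] : G.essImage.IsStableUnderRetracts where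
  of_retract h := fun ⟨_, ⟨e⟩⟩ => G.essImage_of_retract_obj (h.trans e.symm.retract)

variable [Preadditive C] [Preadditive D] (F : C ⥤ D) [F.Additive]

instance mapMat_additive : F.mapMat_.Additive where
  map_add := by intros; ext; exact F.map_add

instance mapMat_full [F.Full] : F.mapMat_.Full where
  map_surjective g := ⟨fun i j => F.preimage (g i j), by ext; exact F.map_preimage _⟩

instance mapMat_faithful [F.Faithful] : F.mapMat_.Faithful where
  map_injective h := by ext i j; exact F.map_injective (congr_fun (congr_fun h i) j)

end Functor

namespace Mat_

variable [Preadditive C]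

def retractEmbeddingOfSumEqId {X : C} {ι : Type} [Fintype ι] (Y : ι → C)
    (s : ∀ j, X ⟶ Y j) (r : ∀ j, Y j ⟶ X) (h : ∑ j, s j ≫ r j = 𝟙 X) :
    Retract ((embedding C).obj X) ⟨ι, Y⟩ where
  i _ := s
  r j _ := r j
  retract := by
    ext ⟨⟩ ⟨⟩
    erw [comp_apply, id_apply_self]
    exact h

lemma exists_retract_mapMat_obj [Preadditive D] (F : C ⥤ D) [F.Additive]
    (hdom : ∀ Y : D, ∃ (m : ℕ) (x : Fin m → C) (s : ∀ j, Y ⟶ F.obj (x j))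
      (r : ∀ j, F.obj (x j) ⟶ Y), ∑ j, s j ≫ r j = 𝟙 Y) (M : Mat_ D) :
    ∃ N : Mat_ C, Nonempty (Retract M (F.mapMat_.obj N)) := by
  choose m x s r hsr using hdom
  let N (i : M.ι) : Mat_ C := ⟨Fin (m (M.X i)), x (M.X i)⟩
  exact ⟨⨁ N, ⟨M.isoBiproductEmbedding.retract.trans <|
    (Retract.biproduct fun i => retractEmbeddingOfSumEqId _ _ _ (hsr (M.X i))).trans
      (F.mapMat_.mapBiproduct N).symm.retract⟩⟩

end Mat_

namespace Idempotents

variable (G : C ⥤ D)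

instance functorExtension₂_obj_faithful [G.Faithful] :
    ((functorExtension₂ C D).obj G).Faithful where
  map_injective h := by ext; exact G.map_injective (congrArg Karoubi.Hom.f h)

instance functorExtension₂_obj_full [G.Full] :
    ((functorExtension₂ C D).obj G).Full where
  map_surjective {P Q} g := by
    obtain ⟨f, hf⟩ := G.map_surjective (X := P.X) (Y := Q.X) g.f
    refine ⟨⟨P.p ≫ f ≫ Q.p, by simp [reassoc_of% P.idem]⟩, ?_⟩
    ext
    change G.map (P.p ≫ f ≫ Q.p) = g.f
    rw [G.map_comp, G.map_comp, hf]
    exact g.comm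

lemma functorExtension₂_obj_isEquivalence [G.Full] [G.Faithful]
    (hG : ∀ Y : D, ∃ X : C, Nonempty (Retract Y (G.obj X))) :
    ((functorExtension₂ C D).obj G).IsEquivalence where
  essSurj := ⟨fun P => by
    obtain ⟨X, ⟨h⟩⟩ := hG P.X
    have hX : ((functorExtension₂ C D).obj G).essImage ((toKaroubi D).obj (G.obj X)) :=
      ⟨(toKaroubi C).obj X, ⟨((functorExtension₂CompWhiskeringLeftToKaroubiIso C D).app G).app X⟩⟩
    exact ObjectProperty.prop_of_retract _ (P.retract.trans (h.map (toKaroubi D))) hX⟩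

end Idempotents

end CategoryTheory

theorem fully_faithful_dominating_is_morita_equivalence_general
    {A : Type*} [Category A] [Preadditive A]
    {A' : Type*} [Category A'] [Preadditive A']
    (F : A ⥤ A') [F.Additive] [F.Full] [F.Faithful]
    (hdom : ∀ X' : A', ∃ (m : ℕ) (x : Fin m → A)
      (s : ∀ j, X' ⟶ F.obj (x j)) (r : ∀ j, F.obj (x j) ⟶ X'),
      ∑ j, s j ≫ r j = 𝟙 X') :
    ((functorExtension₂ (C := Mat_ A) (D := Mat_ A')).obj F.mapMat_).IsEquivalence :=
  functorExtension₂_obj_isEquivalence F.mapMat_ (Mat_.exists_retract_mapMat_obj F hdom)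

/-- Let `k` be a field, `A` and `A'` linear categories over `k`, and
`F : A ⥤ A'` a fully faithful linear functor. If the set of objects `{F(x)}` dominates `A'`,
then `F` is a Morita equivalence: the induced linear functor
`F̂ : Kar(Mat(A)) ⥤ Kar(Mat(A'))` between the completions is an equivalence. -/
theorem fully_faithful_dominating_is_morita_equivalence
    {k : Type*} [Field k]
    {A : Type*} [Category A] [Preadditive A] [Linear k A]
    {A' : Type*} [Category A'] [Preadditive A'] [Linear k A']
    (F : A ⥤ A') [F.Additive] [F.Linear k] [F.Full] [F.Faithful]
    (hdom : ∀ X' : A', ∃ (m : ℕ) (x : Fin m → A)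
      (s : ∀ j, X' ⟶ F.obj (x j)) (r : ∀ j, F.obj (x j) ⟶ X'),
      ∑ j, s j ≫ r j = 𝟙 X') :
    ((functorExtension₂ (C := Mat_ A) (D := Mat_ A')).obj F.mapMat_).IsEquivalence :=
  fully_faithful_dominating_is_morita_equivalence_general F hdom
end

section
/- Let A be a preadditive category, let x be an object of A, and suppose there are finitely many objects y_1, …, y_m of A and morphisms s_j : x → y_j and r_j : y_j → x (1 ≤ j ≤ m) with ∑_{j=1}^m r_j ∘ s_j = id_x. Then the m × m matrix q with entries q_{ij} = s_i ∘ r_j : y_j → y_i is an idempotent endomorphism of the object (y_1, …, y_m) of Mat(A), and the image of x under the canonical embedding A → Kar(Mat(A)) is isomorphic to the object ((y_1, …, y_m), q) of Kar(Mat(A)); in particular x is a retract of (y_1, …, y_m) in Mat(A). -/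
open CategoryTheory CategoryTheory.Idempotents

/-! The morphisms `s j` and `r j` assemble into a row `x ⟶ (y j)_j` and a column `(y j)_j ⟶ x`
of `Mat_ A` whose composite is `∑ j, s j ≫ r j = 𝟙 x`, so `x` is a retract of `(y j)_j`.
In the Karoubi envelope a retract `X` of `Y` with maps `i` and `r` is isomorphic to `(Y, r ≫ i)`,
and here `r ≫ i` is the matrix `(r i ≫ s j)_{i j}`. -/

namespace CategoryTheory.Retract

variable {C : Type*} [Category C] {X Y : C} (h : Retract X Y)

theorem r_comp_i_idem : (h.r ≫ h.i) ≫ h.r ≫ h.i = h.r ≫ h.i := by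
  simp

def toKaroubiIso : (toKaroubi C).obj X ≅ Karoubi.mk Y (h.r ≫ h.i) h.r_comp_i_idem where
  hom := ⟨h.i, by simp⟩
  inv := ⟨h.r, by simp⟩

end CategoryTheory.Retract

namespace CategoryTheory.Mat_

variable {A : Type*} [Category A] [Preadditive A] {x : A}
  {ι : Type} [Fintype ι] {y : ι → A}

def retractOfSumEqId (s : ∀ j, x ⟶ y j) (r : ∀ j, y j ⟶ x) (h : ∑ j, s j ≫ r j = 𝟙 x) :
    Retract ((embedding A).obj x) (Mat_.mk ι y) where
  i := fun _ j => s j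
  r := fun j _ => r j
  retract := by
    ext ⟨⟩ ⟨⟩
    change ∑ j, s j ≫ r j = _
    rw [h]
    exact (id_apply_self ((embedding A).obj x) PUnit.unit).symm

theorem retractOfSumEqId_r_comp_i_apply (s : ∀ j, x ⟶ y j) (r : ∀ j, y j ⟶ x)
    (h : ∑ j, s j ≫ r j = 𝟙 x) (i j : ι) :
    ((retractOfSumEqId s r h).r ≫ (retractOfSumEqId s r h).i) i j = r i ≫ s j := by
  change ∑ _ : PUnit, r i ≫ s j = r i ≫ s j
  exact Fintype.sum_unique _

end CategoryTheory.Mat_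

/-- Let `A` be a preadditive category, `x` an object of `A`, and suppose there
are objects `y 0, …, y (m-1)` and morphisms `s j : x ⟶ y j`, `r j : y j ⟶ x` with
`∑ j, s j ≫ r j = 𝟙 x`. Then the matrix `q` with entries `q i j = r i ≫ s j : y i ⟶ y j`
is an idempotent endomorphism of the object `(y 0, …, y (m-1))` of `Mat_ A`, the image of `x`
under the canonical embedding `A ⥤ Kar(Mat_ A)` is isomorphic to the object
`((y 0, …, y (m-1)), q)` of `Kar(Mat_ A)`, and in particular `x` is a retract of
`(y 0, …, y (m-1))` in `Mat_ A`. -/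
theorem domination_gives_retract_in_completion
    {A : Type*} [Category A] [Preadditive A]
    (x : A) (m : ℕ) (y : Fin m → A)
    (s : ∀ j, x ⟶ y j) (r : ∀ j, y j ⟶ x)
    (h : ∑ j, s j ≫ r j = 𝟙 x) :
    ∃ q : Mat_.mk (Fin m) y ⟶ Mat_.mk (Fin m) y,
      (∀ i j, q i j = r i ≫ s j) ∧
      ∃ hq : q ≫ q = q,
        Nonempty (((Mat_.embedding A ⋙ toKaroubi (Mat_ A)).obj x) ≅
            Karoubi.mk (Mat_.mk (Fin m) y) q hq) ∧
        ∃ (i : (Mat_.embedding A).obj x ⟶ Mat_.mk (Fin m) y)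
          (p : Mat_.mk (Fin m) y ⟶ (Mat_.embedding A).obj x),
          i ≫ p = 𝟙 ((Mat_.embedding A).obj x) := by
  let e := Mat_.retractOfSumEqId s r h
  exact ⟨e.r ≫ e.i, Mat_.retractOfSumEqId_r_comp_i_apply s r h, e.r_comp_i_idem,
    ⟨e.toKaroubiIso⟩, e.i, e.r, e.retract⟩
end

section
/- Let G be an abelian group, let X ⊆ G be small, and let I ⊆ G be a finite subset. Then there exist g, g' ∈ G such that the three translates g + I, g' + I, and (g + g') + I are all contained in G ∖ X (i.e. disjoint from X). -/
/-- Let `G` be an abelian group, `X ⊆ G` small (i.e. `G` is not contained in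
any finite union of translates of `X`), and `I ⊆ G` a finite subset. Then there exist
`g, g' ∈ G` such that the three translates `g + I`, `g' + I`, and `(g + g') + I` are all
contained in `G ∖ X`. -/
theorem small_critical_set_avoidance
    {G : Type*} [AddCommGroup G] (X : Set G)
    (hX : ∀ (m : ℕ) (gs : Fin m → G),
      ¬((Set.univ : Set G) ⊆ ⋃ i, (gs i + ·) '' X))
    (I : Finset G) :
    ∃ g g' : G,
      ((g + ·) '' (I : Set G)) ⊆ Xᶜ ∧
      ((g' + ·) '' (I : Set G)) ⊆ Xᶜ ∧
      (((g + g') + ·) '' (I : Set G)) ⊆ Xᶜ := by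
  classical
  set n := I.card with hn
  let e : Fin n → G := fun j => (I.equivFin.symm j : G)
  have heI : ∀ j, e j ∈ I := fun j => (I.equivFin.symm j).2
  have he : ∀ a ∈ I, ∃ j, e j = a := fun a ha =>
    ⟨I.equivFin ⟨a, ha⟩, by simp [e]⟩
  -- membership characterization
  have mem_iff : ∀ (c h : G), h ∈ ((c + ·) '' X) ↔ h - c ∈ X := by
    intro c h
    constructor
    · rintro ⟨x, hx, rfl⟩; simpa using hx
    · intro hx; exact ⟨h - c, hx, by show c + (h - c) = h; rw [add_comm, sub_add_cancel]⟩
  have key : ∀ h : G, (∀ j : Fin n, h ∉ ((-(e j) + ·) '' X)) →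
      ((h + ·) '' (I : Set G)) ⊆ Xᶜ := by
    intro h hh
    rintro y ⟨a, haI, rfl⟩
    obtain ⟨j, rfl⟩ := he a haI
    intro hy
    exact hh j ((mem_iff _ _).2 (by simpa [sub_neg_eq_add, add_comm] using hy))
  -- first choose g
  have h1 : ∃ g : G, ∀ j : Fin n, g ∉ ((-(e j) + ·) '' X) := by
    by_contra hcon
    push_neg at hcon
    exact hX n (fun j => -(e j)) (fun y _ => by
      obtain ⟨j, hj⟩ := hcon y
      exact Set.mem_iUnion.2 ⟨j, hj⟩)
  obtain ⟨g, hg⟩ := h1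
  -- then choose g'
  have h2 : ∃ g' : G, (∀ j : Fin n, g' ∉ ((-(e j) + ·) '' X)) ∧
      (∀ j : Fin n, g + g' ∉ ((-(e j) + ·) '' X)) := by
    by_contra hcon
    push_neg at hcon
    refine hX (n + n) (Fin.addCases (fun j => -(e j)) (fun j => -(e j) - g)) ?_
    intro y _
    rcases Classical.em (∃ j, y ∈ ((-(e j) + ·) '' X)) with ⟨j, hj⟩ | hno
    · exact Set.mem_iUnion.2 ⟨Fin.castAdd n j, by
        simpa [Fin.addCases_left] using hj⟩
    · push_neg at hno
      obtain ⟨j, hj⟩ := hcon y hno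
      refine Set.mem_iUnion.2 ⟨Fin.natAdd n j, ?_⟩
      show y ∈ ((Fin.addCases (fun j => -(e j)) (fun j => -(e j) - g) (Fin.natAdd n j) : G) + ·) '' X
      rw [Fin.addCases_right, mem_iff]
      rw [mem_iff] at hj
      have : y - (-(e j) - g) = g + y - -(e j) := by abel
      rw [this]
      exact hj
  obtain ⟨g', hg', hgg'⟩ := h2
  exact ⟨g, g', key g hg, key g' hg', key (g + g') hgg'⟩
end
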